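/- arXiv:1607.06078 — 5 statements merged into one kernel-verified Lean document; each statement's English description precedes it below -/
import Mathlib

section
/- Let X be a metric space, T : X → X an (a₁, a₂, b₁, b₂)-hybrid mapping, i.e., a₁(x)·d(Tx,Ty)² + a₂(x)·d(Tx,y)² ≤ b₁(x)·d(x,Ty)² + b₂(x)·d(x,y)² for all x, y, where a₁(x) + a₂(x) ≥ 1 and b₁(x) + b₂(x) ≤ 1, and a₁, a₂ take values outside the open interval (0,1) and b₁, b₂ take values in [0,1]. If p and q are fixed points of T (Tp = p, Tq = q), then for all y: d(p, Ty) ≤ d(p, y); in particular the fixed point set of T is closed. -/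
theorem hybrid_fixed_points
    {X : Type*} [MetricSpace X] (T : X → X)
    (a₁ a₂ b₁ b₂ : X → ℝ)
    (ha : ∀ x, a₁ x ∉ Set.Ioo (0 : ℝ) 1 ∧ a₂ x ∉ Set.Ioo (0 : ℝ) 1)
    (hb : ∀ x, b₁ x ∈ Set.Icc (0 : ℝ) 1 ∧ b₂ x ∈ Set.Icc (0 : ℝ) 1)
    (hsuma : ∀ x, 1 ≤ a₁ x + a₂ x)
    (hsumb : ∀ x, b₁ x + b₂ x ≤ 1)
    (hT : ∀ x y : X,
      a₁ x * dist (T x) (T y) ^ 2 + a₂ x * dist (T x) y ^ 2 ≤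
        b₁ x * dist x (T y) ^ 2 + b₂ x * dist x y ^ 2)
    (p q : X) (hp : T p = p) (hq : T q = q) :
    (∀ y : X, dist p (T y) ≤ dist p y) ∧ IsClosed {x : X | T x = x} := by
  have key : ∀ r : X, T r = r → ∀ y : X, dist r (T y) ≤ dist r y := by
    intro r hr y
    have h := hT y r
    rw [hr] at h
    rw [dist_comm r (T y), dist_comm r y]
    have h1 := dist_nonneg (x := T y) (y := r)
    have h2 := dist_nonneg (x := y) (y := r)
    nlinarith [sq_nonneg (dist (T y) r), sq_nonneg (dist y r), hsuma y, hsumb y,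
      mul_nonneg h1 h2]
  refine ⟨key p hp, ?_⟩
  apply IsSeqClosed.isClosed
  intro u x hu hux
  have h1 : Filter.Tendsto (fun n => dist (u n) (T x)) Filter.atTop (nhds (dist x (T x))) :=
    (Continuous.dist continuous_id continuous_const).continuousAt.tendsto.comp hux
  have h2 : Filter.Tendsto (fun n => dist (u n) x) Filter.atTop (nhds 0) :=
    tendsto_iff_dist_tendsto_zero.mp hux
  have hle : dist x (T x) ≤ 0 :=
    le_of_tendsto_of_tendsto' h1 h2 fun n => key (u n) (hu n) x
  have : dist x (T x) = 0 := le_antisymm hle dist_nonneg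
  exact (eq_of_dist_eq_zero this).symm
end

section
/- Let X be a metric space and T : X → X a generalized hybrid mapping, i.e., d(Tx,Ty)² ≤ a₁(x)d(x,y)² + a₂(x)d(Tx,y)² + a₃(x)d(x,Ty)² + k₁(x)d(Tx,x)² + k₂(x)d(Ty,y)² for all x, y, where a₁,a₂,a₃,k₁,k₂ : X → [0,1] with a₁(x)+a₂(x)+a₃(x) < 1, 2k₁(x) < 1 − a₂(x) and 2k₂(x) < 1 − a₃(x). Then the fixed point set F(T) is closed: if xₙ ∈ F(T) and xₙ → x, then Tx = x. -/
theorem generalized_hybrid_fixed_point_set_closed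
    {X : Type*} [MetricSpace X] (T : X → X)
    (a₁ a₂ a₃ k₁ k₂ : X → ℝ)
    (hrange : ∀ x, a₁ x ∈ Set.Icc (0 : ℝ) 1 ∧ a₂ x ∈ Set.Icc (0 : ℝ) 1 ∧
      a₃ x ∈ Set.Icc (0 : ℝ) 1 ∧ k₁ x ∈ Set.Icc (0 : ℝ) 1 ∧ k₂ x ∈ Set.Icc (0 : ℝ) 1)
    (hsum : ∀ x, a₁ x + a₂ x + a₃ x < 1)
    (hk₁ : ∀ x, 2 * k₁ x < 1 - a₂ x)
    (hk₂ : ∀ x, 2 * k₂ x < 1 - a₃ x)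
    (hT : ∀ x y : X,
      dist (T x) (T y) ^ 2 ≤ a₁ x * dist x y ^ 2 + a₂ x * dist (T x) y ^ 2 +
        a₃ x * dist x (T y) ^ 2 + k₁ x * dist (T x) x ^ 2 + k₂ x * dist (T y) y ^ 2)
    (xseq : ℕ → X) (hfix : ∀ n, T (xseq n) = xseq n)
    (x : X) (hlim : Filter.Tendsto xseq Filter.atTop (nhds x)) :
    T x = x := by
  set α := 1 - a₂ x - 2 * k₁ x with hα
  have hαpos : 0 < α := by have := hk₁ x; simp only [hα]; linarith
  obtain ⟨h1, h2, h3, h4, h5⟩ := hrange x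
  have hc : 0 ≤ a₁ x + a₃ x + 2 * k₁ x := by nlinarith [h1.1, h3.1, h4.1]
  set c := (a₁ x + a₃ x + 2 * k₁ x) / α with hcdef
  have hc0 : 0 ≤ c := div_nonneg hc hαpos.le
  have key : ∀ n, dist (T x) (xseq n) ≤ Real.sqrt c * dist x (xseq n) := by
    intro n
    have h := hT x (xseq n)
    rw [hfix n] at h
    have htri : dist (T x) x ≤ dist (T x) (xseq n) + dist (xseq n) x := dist_triangle _ _ _
    have hcm : dist (xseq n) x = dist x (xseq n) := dist_comm _ _
    have hsq : dist (T x) x ^ 2 ≤ 2 * dist (T x) (xseq n) ^ 2 + 2 * dist x (xseq n) ^ 2 := by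
      rw [hcm] at htri
      nlinarith [sq_nonneg (dist (T x) (xseq n) - dist x (xseq n)),
        dist_nonneg (x := T x) (y := x), dist_nonneg (x := T x) (y := xseq n),
        dist_nonneg (x := x) (y := xseq n)]
    have hDsq : dist (T x) (xseq n) ^ 2 ≤ c * dist x (xseq n) ^ 2 := by
      rw [hcdef, div_mul_eq_mul_div, le_div_iff₀ hαpos]
      simp only [dist_self] at h
      nlinarith [h4.1]
    calc dist (T x) (xseq n) = Real.sqrt (dist (T x) (xseq n) ^ 2) := by
          rw [Real.sqrt_sq dist_nonneg]
      _ ≤ Real.sqrt (c * dist x (xseq n) ^ 2) := Real.sqrt_le_sqrt hDsq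
      _ = Real.sqrt c * dist x (xseq n) := by
          rw [Real.sqrt_mul hc0, Real.sqrt_sq dist_nonneg]
  have hE : Filter.Tendsto (fun n => dist x (xseq n)) Filter.atTop (nhds 0) := by
    simpa [dist_comm] using tendsto_iff_dist_tendsto_zero.mp hlim
  have hD : Filter.Tendsto (fun n => dist (T x) (xseq n)) Filter.atTop (nhds 0) := by
    have hmul : Filter.Tendsto (fun n => Real.sqrt c * dist x (xseq n)) Filter.atTop (nhds 0) := by
      simpa using hE.const_mul (Real.sqrt c)
    exact squeeze_zero (fun n => dist_nonneg) key hmul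
  have hlim' : Filter.Tendsto xseq Filter.atTop (nhds (T x)) :=
    tendsto_iff_dist_tendsto_zero.mpr (by simpa [dist_comm] using hD)
  exact tendsto_nhds_unique hlim' hlim
end

section
/- Let X be a metric space and T : X → X a generalized hybrid mapping (with functions a₁,a₂,a₃,k₁,k₂ as in the definition). If p is a fixed point of T, then for every x ∈ X: d(Tx, p)² ≤ d(x, p)² + (k₁(x)/(1 − a₂(x)))·d(Tx, x)². -/
theorem generalized_hybrid_quasi_estimate
    {X : Type*} [MetricSpace X] (T : X → X)
    (a₁ a₂ a₃ k₁ k₂ : X → ℝ)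
    (hrange : ∀ x, a₁ x ∈ Set.Icc (0 : ℝ) 1 ∧ a₂ x ∈ Set.Icc (0 : ℝ) 1 ∧
      a₃ x ∈ Set.Icc (0 : ℝ) 1 ∧ k₁ x ∈ Set.Icc (0 : ℝ) 1 ∧ k₂ x ∈ Set.Icc (0 : ℝ) 1)
    (hsum : ∀ x, a₁ x + a₂ x + a₃ x < 1)
    (hk₁ : ∀ x, 2 * k₁ x < 1 - a₂ x)
    (hk₂ : ∀ x, 2 * k₂ x < 1 - a₃ x)
    (hT : ∀ x y : X,
      dist (T x) (T y) ^ 2 ≤ a₁ x * dist x y ^ 2 + a₂ x * dist (T x) y ^ 2 +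
        a₃ x * dist x (T y) ^ 2 + k₁ x * dist (T x) x ^ 2 + k₂ x * dist (T y) y ^ 2)
    (p : X) (hp : T p = p) :
    ∀ x : X, dist (T x) p ^ 2 ≤ dist x p ^ 2 + (k₁ x / (1 - a₂ x)) * dist (T x) x ^ 2 := by
  intro x
  have h := hT x p
  rw [hp] at h
  simp only [dist_self] at h
  have hpos : (0:ℝ) < 1 - a₂ x := by
    have h1 := (hrange x).1.1
    have h3 := (hrange x).2.2.1.1
    have := hsum x
    linarith
  have hk1nn : 0 ≤ k₁ x := (hrange x).2.2.2.1.1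
  have key : (1 - a₂ x) * dist (T x) p ^ 2 ≤
      (a₁ x + a₃ x) * dist x p ^ 2 + k₁ x * dist (T x) x ^ 2 := by nlinarith [sq_nonneg (dist x p)]
  have hfrac : dist (T x) p ^ 2 ≤ ((a₁ x + a₃ x) / (1 - a₂ x)) * dist x p ^ 2 +
      (k₁ x / (1 - a₂ x)) * dist (T x) x ^ 2 := by
    rw [div_mul_eq_mul_div, div_mul_eq_mul_div, ← add_div, le_div_iff₀ hpos]
    linarith [key]
  have hle1 : (a₁ x + a₃ x) / (1 - a₂ x) ≤ 1 := by
    rw [div_le_one hpos]; linarith [hsum x]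
  have := mul_le_of_le_one_left (sq_nonneg (dist x p)) hle1
  linarith
end

section
/- Let X be a metric space and T a multivalued map from X to nonempty subsets of X satisfying: for all x, y and all u ∈ Tx, v ∈ Ty, a₁(x)d(u,v)² + a₂(x)d(u,y)² ≤ b₁(x)d(x,v)² + b₂(x)d(x,y)², where a₁(x)+a₂(x) ≥ 1, 0 ≤ b₁, b₂ and b₁(x)+b₂(x) ≤ 1, a₁, a₂ ≥ 0 on the relevant points. If p is a fixed point (p ∈ Tp), then Tp = {p} and the set of fixed points of T is closed. -/
theorem multivalued_hybrid_typeI_fixed_points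
    {X : Type*} [MetricSpace X] (T : X → Set X)
    (hTne : ∀ x, (T x).Nonempty)
    (a₁ a₂ b₁ b₂ : X → ℝ)
    (ha₁ : ∀ x, 0 ≤ a₁ x) (ha₂ : ∀ x, 0 ≤ a₂ x)
    (hb : ∀ x, b₁ x ∈ Set.Icc (0 : ℝ) 1 ∧ b₂ x ∈ Set.Icc (0 : ℝ) 1)
    (hsuma : ∀ x, 1 ≤ a₁ x + a₂ x)
    (hsumb : ∀ x, b₁ x + b₂ x ≤ 1)
    (hT : ∀ x y : X, ∀ u ∈ T x, ∀ v ∈ T y,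
      a₁ x * dist u v ^ 2 + a₂ x * dist u y ^ 2 ≤
        b₁ x * dist x v ^ 2 + b₂ x * dist x y ^ 2)
    (p : X) (hp : p ∈ T p) :
    T p = {p} ∧ IsClosed {x : X | x ∈ T x} := by
  -- Key: if y is a fixed point and u ∈ T x, then dist u y ≤ dist x y.
  have key : ∀ x y : X, y ∈ T y → ∀ u ∈ T x, dist u y ≤ dist x y := by
    intro x y hy u hu
    have h := hT x y u hu y hy
    have h1 := hsuma x
    have hb1 := (hb x).1
    have hb2 := (hb x).2
    have hsb := hsumb x
    have hd1 : (0:ℝ) ≤ dist u y := dist_nonneg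
    have hd2 : (0:ℝ) ≤ dist x y := dist_nonneg
    nlinarith [sq_nonneg (dist u y), sq_nonneg (dist x y), hb1.1, hb2.1,
      mul_nonneg hb1.1 (sq_nonneg (dist x y))]
  constructor
  · apply Set.eq_singleton_iff_unique_mem.mpr
    refine ⟨hp, fun v hv => ?_⟩
    have h := key p p hp v hv
    have h0 : dist v p ≤ 0 := by simpa using h
    simpa [dist_eq_zero] using le_antisymm h0 dist_nonneg
  · apply IsSeqClosed.isClosed
    intro s x hs hx
    obtain ⟨u, hu⟩ := hTne x
    have hdist : ∀ n, dist u (s n) ≤ dist x (s n) := fun n => key x (s n) (hs n) u hu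
    have h0 : Filter.Tendsto (fun n => dist x (s n)) Filter.atTop (nhds 0) := by
      simpa [dist_comm] using (tendsto_iff_dist_tendsto_zero.mp hx)
    have h1 : Filter.Tendsto (fun n => dist u (s n)) Filter.atTop (nhds 0) :=
      squeeze_zero (fun n => dist_nonneg) hdist h0
    have hsu : Filter.Tendsto s Filter.atTop (nhds u) := by
      rw [tendsto_iff_dist_tendsto_zero]
      simpa [dist_comm] using h1
    have : x = u := tendsto_nhds_unique hx hsu
    subst this
    exact hu
end

section
/- Let H be a real Hilbert space, K a nonempty closed convex subset, and T : K → K a generalized hybrid mapping with k₁ ≡ k₂ ≡ 0: d(Tx,Ty)² ≤ a₁(x)d(x,y)² + a₂(x)d(Tx,y)² + a₃(x)d(x,Ty)² with a₁+a₂+a₃ < 1 pointwise, aᵢ : K → [0,1]. If p ∈ K is a fixed point of T and {xₙ} ⊆ K satisfies d(xₙ, Txₙ) → 0 and xₙ ⇀ z weakly, then Tz = z (demiclosedness at 0). -/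
set_option maxHeartbeats 1000000


open RealInnerProductSpace

theorem generalized_hybrid_demiclosed
    {H : Type*} [NormedAddCommGroup H] [InnerProductSpace ℝ H] [CompleteSpace H]
    (K : Set H) (hK : K.Nonempty) (hKc : IsClosed K) (hKconv : Convex ℝ K)
    (T : H → H) (hTK : ∀ x ∈ K, T x ∈ K)
    (a₁ a₂ a₃ : H → ℝ)
    (hrange : ∀ x ∈ K, a₁ x ∈ Set.Icc (0 : ℝ) 1 ∧ a₂ x ∈ Set.Icc (0 : ℝ) 1 ∧
      a₃ x ∈ Set.Icc (0 : ℝ) 1)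
    (hsum : ∀ x ∈ K, a₁ x + a₂ x + a₃ x < 1)
    (hT : ∀ x ∈ K, ∀ y ∈ K,
      ‖T x - T y‖ ^ 2 ≤ a₁ x * ‖x - y‖ ^ 2 + a₂ x * ‖T x - y‖ ^ 2 +
        a₃ x * ‖x - T y‖ ^ 2)
    (p : H) (hpK : p ∈ K) (hp : T p = p)
    (x : ℕ → H) (hxK : ∀ n, x n ∈ K)
    (hasym : Filter.Tendsto (fun n => ‖x n - T (x n)‖) Filter.atTop (nhds 0))
    (z : H) (hzK : z ∈ K)
    (hweak : ∀ y : H, Filter.Tendsto (fun n => ⟪x n, y⟫) Filter.atTop (nhds ⟪z, y⟫)) :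
    T z = z := by
  -- Boundedness of the sequence via Banach–Steinhaus
  obtain ⟨M, hM⟩ : ∃ M : ℝ, ∀ n, ‖x n‖ ≤ M := by
    obtain ⟨C, hC⟩ := banach_steinhaus (g := fun n => innerSL ℝ (x n)) (fun y => by
      obtain ⟨C, hC⟩ := ((hweak y).norm.bddAbove_range)
      exact ⟨C, fun n => hC ⟨n, rfl⟩⟩)
    exact ⟨C, fun n => by simpa [innerSL_apply_norm] using hC n⟩
  have hM0 : (0:ℝ) ≤ M := le_trans (norm_nonneg _) (hM 0)
  set u := T z with hu
  set a := a₁ z; set b := a₂ z; set c := a₃ z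
  obtain ⟨⟨ha0, _⟩, ⟨hb0, _⟩, ⟨hc0, hc1⟩⟩ := hrange z hzK
  have hsz : a + b + c < 1 := hsum z hzK
  have hb1 : b < 1 := by linarith
  -- key quantities
  set D : ℝ := ‖u - z‖ ^ 2 with hD
  -- tendsto of the difference of squared norms
  have tD : Filter.Tendsto (fun n => ‖u - x n‖ ^ 2 - ‖z - x n‖ ^ 2)
      Filter.atTop (nhds D) := by
    have heq : (fun n => ‖u - x n‖ ^ 2 - ‖z - x n‖ ^ 2)
        = fun n => D + 2 * ⟪z, u - z⟫ - 2 * ⟪x n, u - z⟫ := by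
      funext n
      rw [hD, norm_sub_sq_real, norm_sub_sq_real, norm_sub_sq_real,
        inner_sub_right, inner_sub_right, real_inner_comm u z,
        real_inner_comm (x n) u, real_inner_comm (x n) z,
        real_inner_self_eq_norm_sq]
      ring
    rw [heq]
    have := ((hweak (u - z)).const_mul 2).const_sub (D + 2 * ⟪z, u - z⟫)
    convert this using 2
    rw [hD, norm_sub_sq_real, inner_sub_right, real_inner_comm u z,
      real_inner_self_eq_norm_sq]
    ring
  -- the vanishing majorant
  set δ : ℕ → ℝ := fun n =>
    2 * ‖x n - T (x n)‖ * (‖u‖ + M) + 2 * (‖z‖ + M) * ‖x n - T (x n)‖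
      + ‖x n - T (x n)‖ ^ 2 with hδ
  have tδ : Filter.Tendsto δ Filter.atTop (nhds 0) := by
    have h1 := (hasym.const_mul 2).mul_const (‖u‖ + M)
    have h2 := (hasym.const_mul (2 * (‖z‖ + M)))
    have h3 := hasym.mul hasym
    have := (h1.add h2).add h3
    simp only [mul_zero, zero_mul, add_zero] at this
    convert this using 2 with n
    simp [hδ, mul_assoc, pow_two, mul_comm, mul_left_comm]
  -- pointwise key inequality
  have key : ∀ n, (1 - b) * (‖u - x n‖ ^ 2 - ‖z - x n‖ ^ 2) ≤ δ n := by
    intro n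
    have hineq := hT z hzK (x n) (hxK n)
    set A := ‖u - T (x n)‖
    set B := ‖u - x n‖
    set Dn := ‖z - x n‖
    set e := ‖x n - T (x n)‖
    have hA0 : 0 ≤ A := norm_nonneg _
    have he0 : 0 ≤ e := norm_nonneg _
    have hBA : B ≤ A + e := by
      calc B = ‖(u - T (x n)) + (T (x n) - x n)‖ := by rw [sub_add_sub_cancel]
        _ ≤ A + ‖T (x n) - x n‖ := norm_add_le _ _
        _ = A + e := by rw [norm_sub_rev]
    have hE : ‖z - T (x n)‖ ≤ Dn + e := by
      calc ‖z - T (x n)‖ = ‖(z - x n) + (x n - T (x n))‖ := by rw [sub_add_sub_cancel]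
        _ ≤ Dn + e := norm_add_le _ _
    have hE0 : 0 ≤ ‖z - T (x n)‖ := norm_nonneg _
    have hDn0 : 0 ≤ Dn := norm_nonneg _
    have hB0 : 0 ≤ B := norm_nonneg _
    have hBM : B ≤ ‖u‖ + M := by
      calc B ≤ ‖u‖ + ‖x n‖ := norm_sub_le _ _
        _ ≤ ‖u‖ + M := by linarith [hM n]
    have hDnM : Dn ≤ ‖z‖ + M := by
      calc Dn ≤ ‖z‖ + ‖x n‖ := norm_sub_le _ _
        _ ≤ ‖z‖ + M := by linarith [hM n]
    -- from hineq: A^2 ≤ a*Dn^2 + b*B^2 + c*‖z - T (x n)‖^2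
    have hE2 : ‖z - T (x n)‖ ^ 2 ≤ (Dn + e) ^ 2 := by nlinarith
    have hB2 : B ^ 2 - 2 * e * B ≤ A ^ 2 := by
      rcases le_or_gt B e with h | h
      · nlinarith
      · have h1 : B - e ≤ A := by linarith
        nlinarith
    simp only [hδ]
    nlinarith [sq_nonneg Dn, mul_nonneg he0 hDn0, sq_nonneg e,
      mul_le_mul_of_nonneg_left hE2 hc0, mul_nonneg (mul_nonneg he0 hDn0) hc0]
  -- pass to the limit
  have hlim : (1 - b) * D ≤ 0 :=
    le_of_tendsto_of_tendsto' (tD.const_mul (1 - b)) tδ key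
  have hD0 : 0 ≤ D := sq_nonneg _
  have : D = 0 := by nlinarith
  have : u - z = 0 := by
    have h' : ‖u - z‖ = 0 := by
      have := sq_eq_zero_iff.mp (by rw [← hD]; exact this)
      simpa using this
    simpa using norm_eq_zero.mp h'
  have := sub_eq_zero.mp this
  simpa [hu] using this
end
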